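/- Let S ⊂ ℝ be a subring finitely generated as a ℤ-module with field of fractions K, and let Γ ⊂ ℝⁿ be an S-module over K in ℝⁿ (i.e., a free S-module of rank n spanning ℝⁿ with ⟨γ,γ⟩ ∈ K for all γ ∈ Γ). Then every non-zero vector of Γ defines a coincidence reflection of Γ, and every coincidence isometry of Γ decomposes as a product of at most n reflections defined by non-zero elements of Γ. -/

import Mathlib

open Matrix

/-- Two additive subgroups of `ℝⁿ` are commensurate if their intersection has
finite index in both. -/
def Commensurate {n : ℕ} (Γ Γ' : AddSubgroup (Fin n → ℝ)) : Prop :=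
  (Γ'.addSubgroupOf Γ).index ≠ 0 ∧ (Γ.addSubgroupOf Γ').index ≠ 0

/-- The matrix of the reflection `ρ_γ : x ↦ x - 2(⟨x,γ⟩/⟨γ,γ⟩)γ` along `γ`. -/
noncomputable def reflMatrix {n : ℕ} (γ : Fin n → ℝ) : Matrix (Fin n) (Fin n) ℝ :=
  1 - (2 / dotProduct γ γ) • Matrix.vecMulVec γ γ

/-- `Q` (acting on `ℝⁿ` by `x ↦ Q.mulVec x`) is a coincidence isometry of `Γ`:
it is orthogonal and `Γ` is commensurate with its image `Q(Γ)`. -/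
def IsCoincidenceIsometry {n : ℕ} (Γ : AddSubgroup (Fin n → ℝ))
    (Q : Matrix (Fin n) (Fin n) ℝ) : Prop :=
  Q ∈ Matrix.orthogonalGroup (Fin n) ℝ ∧
    Commensurate Γ (Γ.map Q.mulVecLin.toAddMonoidHom)

/-- `Q` is a product of at most `n` reflections along non-zero elements of `Γ`. -/
def IsProdOfAtMostNCoincReflections {n : ℕ} (Γ : AddSubgroup (Fin n → ℝ))
    (Q : Matrix (Fin n) (Fin n) ℝ) : Prop :=
  ∃ k : ℕ, k ≤ n ∧ ∃ g : Fin k → (Fin n → ℝ), (∀ i, g i ∈ Γ ∧ g i ≠ 0) ∧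
    Q = (List.ofFn fun i => reflMatrix (g i)).prod

/-- `b` is an `S`-basis of `Γ` which is also an `ℝ`-basis of `ℝⁿ`; i.e. `Γ` is
a free `S`-module of rank `n` spanning `ℝⁿ` with basis `b`. -/
def IsSBasisOf {n : ℕ} (S : Subring ℝ) (b : Fin n → (Fin n → ℝ))
    (Γ : AddSubgroup (Fin n → ℝ)) : Prop :=
  LinearIndependent ℝ b ∧ Submodule.span ℝ (Set.range b) = ⊤ ∧
    ∀ x, x ∈ Γ ↔ ∃ c : Fin n → ℝ, (∀ i, c i ∈ S) ∧ x = ∑ i, c i • b i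

/-!
Since `S` is a finitely generated `ℤ`-module, `Γ` is a finitely generated abelian group, and for
such groups `H ⊓ K` has finite index in `H` exactly when every element of `H` has a non-zero
multiple in `K` (the quotient is then a finitely generated torsion group). In this pointwise form
commensurability is stable under composition of isometries.

A reflection moves `x ∈ Γ` to `x - t γ` with `t = 2⟨x,γ⟩/⟨γ,γ⟩ ∈ K`, and every element of `K` has
a non-zero integer multiple in `S`: being integral over `ℤ`, every non-zero `d ∈ S` divides a
non-zero integer in `S`. As `ρ_γ² = 1`, the reverse inclusion follows by applying `ρ_γ`.

The decomposition is the Cartan–Dieudonné argument: if `Q` moves the basis vector `b j`, a multiple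
`γ ∈ Γ` of `Q b j - b j` gives a reflection with `ρ_γ Q` fixing `b j` and every basis vector that
`Q` fixes; induct on the number of moved basis vectors.
-/

namespace AddSubgroup

instance fg_map {G G' : Type*} [AddGroup G] [AddGroup G'] (H : AddSubgroup G) [AddGroup.FG H]
    (f : G →+ G') : AddGroup.FG (H.map f) :=
  AddGroup.fg_of_surjective (f.addSubgroupMap_surjective H)

variable {G G' : Type*} [AddCommGroup G] [AddCommGroup G']

def isolator (K : AddSubgroup G) : AddSubgroup G where
  carrier := {x | ∃ c : ℕ, c ≠ 0 ∧ c • x ∈ K}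
  zero_mem' := ⟨1, one_ne_zero, by simp⟩
  add_mem' := by
    rintro x y ⟨c, hc, hcx⟩ ⟨d, hd, hdy⟩
    refine ⟨c * d, mul_ne_zero hc hd, ?_⟩
    rw [smul_add, mul_nsmul, mul_nsmul']
    exact K.add_mem (K.nsmul_mem hcx d) (K.nsmul_mem hdy c)
  neg_mem' := by
    rintro x ⟨c, hc, hcx⟩
    exact ⟨c, hc, by simpa only [smul_neg] using K.neg_mem hcx⟩

variable {H K L : AddSubgroup G}

theorem le_isolator_trans (hHK : H ≤ K.isolator) (hKL : K ≤ L.isolator) : H ≤ L.isolator := by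
  intro x hx
  obtain ⟨c, hc, hcx⟩ := hHK hx
  obtain ⟨d, hd, hdcx⟩ := hKL hcx
  exact ⟨d * c, mul_ne_zero hd hc, by rwa [mul_nsmul']⟩

theorem map_le_isolator_map (f : G →+ G') (h : H ≤ K.isolator) :
    H.map f ≤ (K.map f).isolator := by
  rintro _ ⟨x, hx, rfl⟩
  obtain ⟨c, hc, hcx⟩ := h hx
  exact ⟨c, hc, ⟨c • x, hcx, map_nsmul f c x⟩⟩

theorem le_isolator_of_index_addSubgroupOf_ne_zero (h : (K.addSubgroupOf H).index ≠ 0) :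
    H ≤ K.isolator := fun x hx =>
  ⟨_, h, by simpa [mem_addSubgroupOf] using nsmul_index_mem (K.addSubgroupOf H) ⟨x, hx⟩⟩

theorem index_addSubgroupOf_ne_zero_iff [AddGroup.FG H] :
    (K.addSubgroupOf H).index ≠ 0 ↔ H ≤ K.isolator := by
  refine ⟨le_isolator_of_index_addSubgroupOf_ne_zero, fun h => ?_⟩
  have : Finite (H ⧸ K.addSubgroupOf H) := by
    refine AddCommGroup.finite_of_fg_isAddTorsion _ fun y => ?_
    induction y using QuotientAddGroup.induction_on with
    | H x =>
      obtain ⟨c, hc, hcx⟩ := h x.2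
      refine isOfFinAddOrder_iff_nsmul_eq_zero.2 ⟨c, Nat.pos_of_ne_zero hc, ?_⟩
      rwa [← QuotientAddGroup.mk_nsmul, QuotientAddGroup.eq_zero_iff, mem_addSubgroupOf]
  exact index_ne_zero_of_finite

end AddSubgroup

section Reflection

variable {n : ℕ}

theorem reflMatrix_mulVec (γ x : Fin n → ℝ) :
    reflMatrix γ *ᵥ x = x - (2 * (γ ⬝ᵥ x) / (γ ⬝ᵥ γ)) • γ := by
  rw [reflMatrix, sub_mulVec, one_mulVec, smul_mulVec, vecMulVec_mulVec, op_smul_eq_smul,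
    smul_smul, div_mul_eq_mul_div]

theorem reflMatrix_smul {c : ℝ} (hc : c ≠ 0) (γ : Fin n → ℝ) :
    reflMatrix (c • γ) = reflMatrix γ := by
  simp only [reflMatrix, smul_dotProduct, dotProduct_smul, smul_vecMulVec, vecMulVec_smul,
    smul_smul, smul_eq_mul]
  field_simp

theorem reflMatrix_mulVec_of_dotProduct_eq_zero {γ x : Fin n → ℝ} (h : γ ⬝ᵥ x = 0) :
    reflMatrix γ *ᵥ x = x := by
  simp [reflMatrix_mulVec, h]

theorem reflMatrix_sub_mulVec {u v : Fin n → ℝ} (huv : u ≠ v) (h : u ⬝ᵥ u = v ⬝ᵥ v) :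
    reflMatrix (u - v) *ᵥ u = v := by
  have hne : (u - v) ⬝ᵥ (u - v) ≠ 0 := fun h0 => huv (sub_eq_zero.1 (dotProduct_self_eq_zero.1 h0))
  have hcoeff : 2 * ((u - v) ⬝ᵥ u) = (u - v) ⬝ᵥ (u - v) := by
    simp only [sub_dotProduct, dotProduct_sub, dotProduct_comm v u, h]
    ring
  rw [reflMatrix_mulVec, hcoeff, div_self hne, one_smul, sub_sub_cancel]

theorem reflMatrix_mul_self {γ : Fin n → ℝ} (hγ : γ ≠ 0) : reflMatrix γ * reflMatrix γ = 1 := by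
  have hne : γ ⬝ᵥ γ ≠ 0 := fun h => hγ (dotProduct_self_eq_zero.1 h)
  refine mulVec_injective (funext fun x => ?_)
  rw [← mulVec_mulVec, one_mulVec, reflMatrix_mulVec γ x, reflMatrix_mulVec, dotProduct_sub,
    dotProduct_smul, smul_eq_mul]
  field_simp
  module

theorem reflMatrix_mem_orthogonalGroup {γ : Fin n → ℝ} (hγ : γ ≠ 0) :
    reflMatrix γ ∈ orthogonalGroup (Fin n) ℝ := by
  have hT : (reflMatrix γ)ᵀ = reflMatrix γ := by
    simp [reflMatrix, transpose_sub, transpose_smul, transpose_vecMulVec]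
  rw [mem_orthogonalGroup_iff, hT, reflMatrix_mul_self hγ]

theorem dotProduct_mulVec_mulVec_of_mem_orthogonalGroup {Q : Matrix (Fin n) (Fin n) ℝ}
    (hQ : Q ∈ orthogonalGroup (Fin n) ℝ) (x y : Fin n → ℝ) : (Q *ᵥ x) ⬝ᵥ (Q *ᵥ y) = x ⬝ᵥ y := by
  rw [← vecMul_transpose, ← dotProduct_mulVec, mulVec_mulVec, (mem_orthogonalGroup_iff' _ _).1 hQ,
    one_mulVec]

theorem Matrix.eq_one_of_mulVec_eq_self {ι : Type*} {b : ι → Fin n → ℝ}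
    (hspan : Submodule.span ℝ (Set.range b) = ⊤) {Q : Matrix (Fin n) (Fin n) ℝ}
    (hQ : ∀ i, Q *ᵥ b i = b i) : Q = 1 :=
  Matrix.toLin'.injective <| LinearMap.ext_on_range hspan fun i => by simp [hQ i]

end Reflection

theorem Subring.exists_natCast_mul_div_mem {S : Subring ℝ} (hS : Module.Finite ℤ S) {a d : ℝ}
    (ha : a ∈ S) (hd : d ∈ S) (hd0 : d ≠ 0) : ∃ c : ℕ, c ≠ 0 ∧ (c : ℝ) * (a / d) ∈ S := by
  obtain ⟨m, hm, hm0⟩ := (Submodule.ne_bot_iff _).1 <|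
    Ideal.comap_ne_bot_of_integral_mem (R := ℤ) (x := (⟨d, hd⟩ : S)) (by simpa using hd0)
      (Ideal.mem_span_singleton_self _) (IsIntegral.of_finite ℤ _)
  obtain ⟨s, hs⟩ := Ideal.mem_span_singleton'.1 (Ideal.mem_comap.1 hm)
  have hsd : (s : ℝ) * d = m := by simpa using congrArg Subtype.val hs
  refine ⟨m.natAbs ^ 2, pow_ne_zero 2 (Int.natAbs_ne_zero.2 hm0), ?_⟩
  have : ((m.natAbs ^ 2 : ℕ) : ℝ) * (a / d) = m * s * a := by
    rw [Nat.cast_pow, Nat.cast_natAbs, Int.cast_abs, sq_abs, sq, ← hsd]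
    field_simp
  rw [this]
  exact S.mul_mem (S.mul_mem (intCast_mem S m) s.2) ha

namespace IsSBasisOf

variable {n : ℕ} {S : Subring ℝ} {b : Fin n → Fin n → ℝ} {Γ : AddSubgroup (Fin n → ℝ)}

theorem smul_mem (hb : IsSBasisOf S b Γ) {s : ℝ} (hs : s ∈ S) {x : Fin n → ℝ} (hx : x ∈ Γ) :
    s • x ∈ Γ := by
  obtain ⟨c, hc, rfl⟩ := (hb.2.2 x).1 hx
  refine (hb.2.2 _).2 ⟨fun i => s * c i, fun i => S.mul_mem hs (hc i), ?_⟩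
  simp only [Finset.smul_sum, smul_smul]

theorem mem (hb : IsSBasisOf S b Γ) (i : Fin n) : b i ∈ Γ :=
  (hb.2.2 _).2 ⟨Pi.single i 1, fun j => by
    by_cases h : j = i <;> simp [h, S.zero_mem, S.one_mem], by simp⟩

theorem fg (hb : IsSBasisOf S b Γ) (hS : Module.Finite ℤ S) : AddGroup.FG Γ := by
  let φ : (Fin n → S) →+ (Fin n → ℝ) :=
    AddMonoidHom.mk' (fun c => ∑ i, (c i : ℝ) • b i) fun c d => by
      simp only [Pi.add_apply, Subring.coe_add, add_smul, Finset.sum_add_distrib]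
  have hΓ : Γ = φ.range := by
    ext x
    refine (hb.2.2 x).trans ⟨?_, ?_⟩
    · rintro ⟨c, hc, rfl⟩
      exact ⟨fun i => ⟨c i, hc i⟩, rfl⟩
    · rintro ⟨c, rfl⟩
      exact ⟨fun i => c i, fun i => (c i).2, rfl⟩
  have : AddGroup.FG (Fin n → S) := Module.Finite.iff_addGroup_fg.1 inferInstance
  rw [hΓ]
  infer_instance

end IsSBasisOf

theorem two_mul_dotProduct_mem {n : ℕ} {Γ : AddSubgroup (Fin n → ℝ)} {K : Subfield ℝ}
    (hΓK : ∀ γ ∈ Γ, γ ⬝ᵥ γ ∈ K) {x y : Fin n → ℝ} (hx : x ∈ Γ) (hy : y ∈ Γ) :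
    2 * (x ⬝ᵥ y) ∈ K := by
  have h : 2 * (x ⬝ᵥ y) = (x + y) ⬝ᵥ (x + y) - x ⬝ᵥ x - y ⬝ᵥ y := by
    simp only [add_dotProduct, dotProduct_add, dotProduct_comm y x]
    ring
  rw [h]
  exact K.sub_mem (K.sub_mem (hΓK _ (Γ.add_mem hx hy)) (hΓK x hx)) (hΓK y hy)

theorem isCoincidenceIsometry_iff {n : ℕ} {Γ : AddSubgroup (Fin n → ℝ)} (hΓ : AddGroup.FG Γ)
    {Q : Matrix (Fin n) (Fin n) ℝ} :
    IsCoincidenceIsometry Γ Q ↔ Q ∈ orthogonalGroup (Fin n) ℝ ∧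
      Γ ≤ (Γ.map Q.mulVecLin.toAddMonoidHom).isolator ∧
      Γ.map Q.mulVecLin.toAddMonoidHom ≤ Γ.isolator :=
  and_congr_right' (and_congr AddSubgroup.index_addSubgroupOf_ne_zero_iff
    AddSubgroup.index_addSubgroupOf_ne_zero_iff)

theorem isCoincidenceIsometry_reflMatrix {n : ℕ} {S : Subring ℝ} (hS : Module.Finite ℤ S)
    {K : Subfield ℝ} (hK : ∀ x ∈ K, ∃ a d : ℝ, a ∈ S ∧ d ∈ S ∧ d ≠ 0 ∧ x = a / d)
    {b : Fin n → Fin n → ℝ} {Γ : AddSubgroup (Fin n → ℝ)} (hb : IsSBasisOf S b Γ)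
    (hΓK : ∀ γ ∈ Γ, γ ⬝ᵥ γ ∈ K) {γ : Fin n → ℝ} (hγ : γ ∈ Γ) (hγ0 : γ ≠ 0) :
    IsCoincidenceIsometry Γ (reflMatrix γ) := by
  set ρ := (reflMatrix γ).mulVecLin.toAddMonoidHom
  have himage : Γ.map ρ ≤ Γ.isolator := by
    rintro _ ⟨x, hx, rfl⟩
    obtain ⟨a, d, ha, hd, hd0, had⟩ :=
      hK _ (K.div_mem (two_mul_dotProduct_mem hΓK hγ hx) (hΓK γ hγ))
    obtain ⟨c, hc, hcS⟩ := S.exists_natCast_mul_div_mem hS ha hd hd0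
    refine ⟨c, hc, ?_⟩
    have : c • ρ x = c • x - ((c : ℝ) * (a / d)) • γ := by
      rw [← had, show ρ x = reflMatrix γ *ᵥ x from rfl, reflMatrix_mulVec,
        ← Nat.cast_smul_eq_nsmul ℝ, smul_sub, smul_smul, Nat.cast_smul_eq_nsmul]
    rw [this]
    exact Γ.sub_mem (Γ.nsmul_mem hx c) (hb.smul_mem hcS hγ)
  have hinvol : (Γ.map ρ).map ρ = Γ := by
    have : ρ.comp ρ = AddMonoidHom.id _ := AddMonoidHom.ext fun x => by
      change reflMatrix γ *ᵥ (reflMatrix γ *ᵥ x) = x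
      rw [mulVec_mulVec, reflMatrix_mul_self hγ0, one_mulVec]
    rw [AddSubgroup.map_map, this, AddSubgroup.map_id]
  refine (isCoincidenceIsometry_iff (hb.fg hS)).2 ⟨reflMatrix_mem_orthogonalGroup hγ0, ?_, himage⟩
  simpa only [hinvol] using AddSubgroup.map_le_isolator_map ρ himage

namespace IsCoincidenceIsometry

open AddSubgroup

variable {n : ℕ} {Γ : AddSubgroup (Fin n → ℝ)} {Q Q₁ Q₂ : Matrix (Fin n) (Fin n) ℝ}

theorem exists_nsmul_mulVec_mem (hQ : IsCoincidenceIsometry Γ Q) {x : Fin n → ℝ} (hx : x ∈ Γ) :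
    ∃ c : ℕ, c ≠ 0 ∧ c • (Q *ᵥ x) ∈ Γ :=
  le_isolator_of_index_addSubgroupOf_ne_zero hQ.2.2 (mem_map_of_mem _ hx)

theorem mul (hΓ : AddGroup.FG Γ) (h₁ : IsCoincidenceIsometry Γ Q₁)
    (h₂ : IsCoincidenceIsometry Γ Q₂) : IsCoincidenceIsometry Γ (Q₁ * Q₂) := by
  rw [isCoincidenceIsometry_iff hΓ] at h₁ h₂ ⊢
  obtain ⟨ho₁, hl₁, hr₁⟩ := h₁
  obtain ⟨ho₂, hl₂, hr₂⟩ := h₂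
  have hmap : Γ.map (Q₁ * Q₂).mulVecLin.toAddMonoidHom =
      (Γ.map Q₂.mulVecLin.toAddMonoidHom).map Q₁.mulVecLin.toAddMonoidHom := by
    rw [AddSubgroup.map_map, mulVecLin_mul]
    rfl
  refine ⟨mul_mem ho₁ ho₂, ?_, ?_⟩ <;> rw [hmap]
  · exact le_isolator_trans hl₁ (map_le_isolator_map _ hl₂)
  · exact le_isolator_trans (map_le_isolator_map _ hr₂) hr₁

theorem exists_reflMatrix_mul_mulVec_eq (hQ : IsCoincidenceIsometry Γ Q) {v : Fin n → ℝ}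
    (hv : v ∈ Γ) (hQv : Q *ᵥ v ≠ v) :
    ∃ γ ∈ Γ, γ ≠ 0 ∧ (reflMatrix γ * Q) *ᵥ v = v ∧
      ∀ w, Q *ᵥ w = w → (reflMatrix γ * Q) *ᵥ w = w := by
  obtain ⟨c, hc, hcΓ⟩ := hQ.exists_nsmul_mulVec_mem hv
  have hdot := dotProduct_mulVec_mulVec_of_mem_orthogonalGroup hQ.1
  refine ⟨c • (Q *ᵥ v - v), ?_, smul_ne_zero hc (sub_ne_zero.2 hQv), ?_⟩
  · rw [smul_sub]
    exact Γ.sub_mem hcΓ (Γ.nsmul_mem hv c)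
  rw [← Nat.cast_smul_eq_nsmul ℝ, reflMatrix_smul (Nat.cast_ne_zero.2 hc)]
  refine ⟨?_, fun w hw => ?_⟩
  · rw [← mulVec_mulVec]
    exact reflMatrix_sub_mulVec hQv (hdot v v)
  · rw [← mulVec_mulVec, hw]
    refine reflMatrix_mulVec_of_dotProduct_eq_zero ?_
    rw [sub_dotProduct, ← hdot v w, hw, sub_self]

theorem exists_list_reflMatrix_prod (hΓ : AddGroup.FG Γ)
    (hrefl : ∀ γ ∈ Γ, γ ≠ 0 → IsCoincidenceIsometry Γ (reflMatrix γ))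
    {ι : Type*} {b : ι → Fin n → ℝ} (hbΓ : ∀ i, b i ∈ Γ)
    (hspan : Submodule.span ℝ (Set.range b) = ⊤) (s : Finset ι)
    (hQ : IsCoincidenceIsometry Γ Q) (hfix : ∀ i ∉ s, Q *ᵥ b i = b i) :
    ∃ l : List (Fin n → ℝ), l.length ≤ s.card ∧ (∀ γ ∈ l, γ ∈ Γ ∧ γ ≠ 0) ∧
      Q = (l.map reflMatrix).prod := by
  classical
  induction s using Finset.induction_on generalizing Q with
  | empty => exact ⟨[], le_rfl, by simp, eq_one_of_mulVec_eq_self hspan (by simpa using hfix)⟩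
  | insert j t hj ih =>
    have hfix_t : ∀ {P : Matrix (Fin n) (Fin n) ℝ}, P *ᵥ b j = b j →
        (∀ i ∉ insert j t, P *ᵥ b i = b i) → ∀ i ∉ t, P *ᵥ b i = b i := fun hPj hP i hi => by
      by_cases hij : i = j
      · rwa [hij]
      · exact hP i (by simp [hij, hi])
    by_cases hQj : Q *ᵥ b j = b j
    · obtain ⟨l, hl, hlΓ, hQl⟩ := ih hQ (hfix_t hQj hfix)
      exact ⟨l, hl.trans (Finset.card_le_card (Finset.subset_insert j t)), hlΓ, hQl⟩
    obtain ⟨γ, hγ, hγ0, hγj, hγfix⟩ := hQ.exists_reflMatrix_mul_mulVec_eq (hbΓ j) hQj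
    obtain ⟨l, hl, hlΓ, hQl⟩ :=
      ih ((hrefl γ hγ hγ0).mul hΓ hQ) (hfix_t hγj fun i hi => hγfix _ (hfix i hi))
    refine ⟨γ :: l, by simpa [Finset.card_insert_of_notMem hj] using hl,
      List.forall_mem_cons.2 ⟨⟨hγ, hγ0⟩, hlΓ⟩, ?_⟩
    rw [List.map_cons, List.prod_cons, ← hQl, ← mul_assoc, reflMatrix_mul_self hγ0, one_mul]

end IsCoincidenceIsometry

theorem stmt18 {n : ℕ} (S : Subring ℝ) (hS : Module.Finite ℤ S)
    (K : Subfield ℝ)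
    (hK : ∀ x : ℝ, x ∈ K ↔ ∃ a b : ℝ, a ∈ S ∧ b ∈ S ∧ b ≠ 0 ∧ x = a / b)
    (Γ : AddSubgroup (Fin n → ℝ)) (b : Fin n → (Fin n → ℝ)) (hb : IsSBasisOf S b Γ)
    (hΓK : ∀ γ ∈ Γ, dotProduct γ γ ∈ K) :
    (∀ γ ∈ Γ, γ ≠ 0 → IsCoincidenceIsometry Γ (reflMatrix γ)) ∧
    ∀ Q : Matrix (Fin n) (Fin n) ℝ, IsCoincidenceIsometry Γ Q →
      IsProdOfAtMostNCoincReflections Γ Q := by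
  have hrefl : ∀ γ ∈ Γ, γ ≠ 0 → IsCoincidenceIsometry Γ (reflMatrix γ) := fun γ hγ hγ0 =>
    isCoincidenceIsometry_reflMatrix hS (fun x hx => (hK x).1 hx) hb hΓK hγ hγ0
  refine ⟨hrefl, fun Q hQ => ?_⟩
  obtain ⟨l, hl, hlΓ, rfl⟩ :=
    hQ.exists_list_reflMatrix_prod (hb.fg hS) hrefl hb.mem hb.2.1 Finset.univ (by simp)
  exact ⟨l.length, by simpa using hl, (l[·]), fun i => hlΓ _ (List.getElem_mem _),
    (congrArg List.prod (List.ofFn_getElem_eq_map l reflMatrix)).symm⟩
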